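/- arXiv:2110.07269 — 3 statements merged into one kernel-verified Lean document; each statement's English description precedes it below -/
import Mathlib

section
/- Let J be an n×n real matrix, T, η, ℓ > 0 with η ≤ 1/2, satisfying: (i) J + Jᵀ ⪰ 0 (monotonicity), (ii) Jᵀ J ⪯ ℓ² Iₙ (Lipschitz bound), and (iii) T² < (1 - η)/(2ℓ). Then Iₙ - (T²/(ℓ(1-η))) (ℓ Iₙ - Jᵀ)(ℓ Iₙ - J) is positive definite. (This is Lemma 2: reset condition (RC₂) implies ℓ-global contractivity of S₀.) -/
open Matrix

/-!
With `A = ℓIₙ - J` we have `AᵀA = ℓ²Iₙ - ℓ(J + Jᵀ) + JᵀJ ⪯ 2ℓ²Iₙ`, since `ℓ(J + Jᵀ) ⪰ 0` by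
monotonicity and `JᵀJ ⪯ ℓ²Iₙ` by the Lipschitz bound. Hence
`Iₙ - c AᵀA ⪰ (1 - 2cℓ²) Iₙ` for `c = T²/(ℓ(1-η)) ≥ 0`, and (RC₂) together with `η ≤ 1/2`
gives exactly `2cℓ² < 1`.
-/

variable {m : Type*} [DecidableEq m]

theorem transpose_smul_one_sub_mul_smul_one_sub [Fintype m] {R : Type*} [CommRing R]
    (J : Matrix m m R) (ℓ : R) :
    (ℓ • (1 : Matrix m m R) - J)ᵀ * (ℓ • 1 - J) = ℓ ^ 2 • 1 - ℓ • (J + Jᵀ) + Jᵀ * J := by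
  simp only [transpose_sub, transpose_smul, transpose_one, sub_mul, mul_sub, Matrix.smul_mul,
    Matrix.mul_smul, Matrix.one_mul, Matrix.mul_one, smul_smul, smul_add, pow_two]
  abel

theorem posSemidef_two_mul_sq_smul_one_sub_transpose_mul_self [Fintype m]
    {J : Matrix m m ℝ} {ℓ : ℝ} (hℓ : 0 ≤ ℓ) (hmono : (J + Jᵀ).PosSemidef)
    (hlip : (ℓ ^ 2 • (1 : Matrix m m ℝ) - Jᵀ * J).PosSemidef) :
    ((2 * ℓ ^ 2) • (1 : Matrix m m ℝ) - (ℓ • 1 - J)ᵀ * (ℓ • 1 - J)).PosSemidef := by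
  have hsplit : (2 * ℓ ^ 2) • (1 : Matrix m m ℝ) - (ℓ • 1 - J)ᵀ * (ℓ • 1 - J) =
      ℓ • (J + Jᵀ) + (ℓ ^ 2 • 1 - Jᵀ * J) := by
    rw [transpose_smul_one_sub_mul_smul_one_sub, two_mul, add_smul]
    abel
  rw [hsplit]
  exact (hmono.smul hℓ).add hlip

theorem posDef_one_sub_smul_of_posSemidef_smul_one_sub {M : Matrix m m ℝ} {b c : ℝ}
    (hM : (b • (1 : Matrix m m ℝ) - M).PosSemidef) (hc : 0 ≤ c) (hcb : c * b < 1) :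
    ((1 : Matrix m m ℝ) - c • M).PosDef := by
  have hsplit : (1 : Matrix m m ℝ) - c • M = (1 - c * b) • 1 + c • (b • 1 - M) := by
    rw [smul_sub, smul_smul, sub_smul, one_smul]
    abel
  rw [hsplit]
  exact (PosDef.one.smul (sub_pos.mpr hcb)).add_posSemidef (hM.smul hc)

theorem sq_div_mul_one_sub_mul_two_mul_sq_lt_one {T η ℓ : ℝ} (hη2 : η ≤ 1 / 2) (hℓ : 0 < ℓ)
    (hRC2 : T ^ 2 < (1 - η) / (2 * ℓ)) :
    T ^ 2 / (ℓ * (1 - η)) * (2 * ℓ ^ 2) < 1 := by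
  have h1η : 0 < 1 - η := by linarith
  rw [lt_div_iff₀ (by positivity)] at hRC2
  rw [div_mul_eq_mul_div, div_lt_one (by positivity)]
  nlinarith

theorem RC2_implies_contractivity_general {n : ℕ}
    (J : Matrix (Fin n) (Fin n) ℝ) (T η ℓ : ℝ)
    (hη2 : η ≤ 1 / 2) (hℓ : 0 < ℓ)
    (hmono : (J + Jᵀ).PosSemidef)
    (hlip : ((ℓ ^ 2 • (1 : Matrix (Fin n) (Fin n) ℝ)) - Jᵀ * J).PosSemidef)
    (hRC2 : T ^ 2 < (1 - η) / (2 * ℓ)) :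
    ((1 : Matrix (Fin n) (Fin n) ℝ) -
      (T ^ 2 / (ℓ * (1 - η))) •
        ((ℓ • (1 : Matrix (Fin n) (Fin n) ℝ) - Jᵀ) *
          (ℓ • (1 : Matrix (Fin n) (Fin n) ℝ) - J))).PosDef := by
  have hc : 0 ≤ T ^ 2 / (ℓ * (1 - η)) := div_nonneg (sq_nonneg T) (by nlinarith)
  have hJ : ℓ • (1 : Matrix (Fin n) (Fin n) ℝ) - Jᵀ = (ℓ • 1 - J)ᵀ := by
    rw [transpose_sub, transpose_smul, transpose_one]
  rw [hJ]
  exact posDef_one_sub_smul_of_posSemidef_smul_one_sub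
    (posSemidef_two_mul_sq_smul_one_sub_transpose_mul_self hℓ.le hmono hlip) hc
    (sq_div_mul_one_sub_mul_two_mul_sq_lt_one hη2 hℓ hRC2)

/-- Lemma 2 of the paper: under monotonicity (`J + Jᵀ ⪰ 0`), the Lipschitz bound
(`JᵀJ ⪯ ℓ²I`), and the reset condition (RC₂) `T² < (1-η)/(2ℓ)`, the scaled matrix `S₀`
is `ℓ`-globally contractive, i.e.
`Iₙ - (T²/(ℓ(1-η))) (ℓIₙ - Jᵀ)(ℓIₙ - J) ≻ 0`. -/
theorem RC2_implies_contractivity {n : ℕ}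
    (J : Matrix (Fin n) (Fin n) ℝ) (T η ℓ : ℝ)
    (hT : 0 < T) (hη : 0 < η) (hη2 : η ≤ 1 / 2) (hℓ : 0 < ℓ)
    (hmono : (J + Jᵀ).PosSemidef)
    (hlip : ((ℓ ^ 2 • (1 : Matrix (Fin n) (Fin n) ℝ)) - Jᵀ * J).PosSemidef)
    (hRC2 : T ^ 2 < (1 - η) / (2 * ℓ)) :
    ((1 : Matrix (Fin n) (Fin n) ℝ) -
      (T ^ 2 / (ℓ * (1 - η))) •
        ((ℓ • (1 : Matrix (Fin n) (Fin n) ℝ) - Jᵀ) *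
          (ℓ • (1 : Matrix (Fin n) (Fin n) ℝ) - J))).PosDef :=
  RC2_implies_contractivity_general J T η ℓ hη2 hℓ hmono hlip hRC2
end

section
/- Let J be an n×n real matrix and κ, ℓ, T, η, δ real parameters with 0 < κ ≤ ℓ, 0 < η ≤ 1/2, 0 ≤ δ < (1-η)/(σℓ) where σ = ℓ/κ. Suppose (i) J + Jᵀ ⪰ 2κ Iₙ, (ii) Jᵀ J ⪯ ℓ² Iₙ, and (iii) 0 < T² < (1 - η - δσℓ)/(σℓ - κ + δ(1 - η - δσℓ)). Then Iₙ - χ (σℓ Iₙ - Jᵀ)(σℓ Iₙ - J) is positive definite, where χ = (T²/(1 - δT²)) · 1/(σℓ(1-η) - δσ²ℓ²). (This is Lemma 3: (RC₃) implies (σℓ)-global contractivity of S_δ.) -/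
/-!
Write `ρ = σℓ`, so that `ρκ = ℓ²`. Expanding the product,
`I - χ (ρI - Jᵀ)(ρI - J) = (1 - χρ(ρ - κ)) I + χρ (J + Jᵀ - 2κI) + χ (ρκ I - JᵀJ)`,
and the last two terms are positive semidefinite by strong monotonicity and the Lipschitz bound.
It remains to see `χρ(ρ - κ) < 1`. Since `ρ(1 - η) - δρ² = ρA` with `A = 1 - η - δρ > 0`,
this reads `T²(ρ - κ) < (1 - δT²) A`, i.e. `T² (ρ - κ + δA) < A`, which is (RC₃).
-/

open Matrix

/-- The coefficient `χ(ρ, δ)` of the paper. -/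
noncomputable def contractionCoeff (T η δ ρ : ℝ) : ℝ :=
  T ^ 2 / (1 - δ * T ^ 2) * (1 / (ρ * (1 - η) - δ * ρ ^ 2))

section Scalar

variable {T η δ ρ κ : ℝ}

lemma mul_add_lt_of_rc3 (hκρ : κ ≤ ρ) (hδ : 0 ≤ δ) (hA : 0 < 1 - η - δ * ρ)
    (hRC3 : T ^ 2 < (1 - η - δ * ρ) / (ρ - κ + δ * (1 - η - δ * ρ))) :
    T ^ 2 * (ρ - κ + δ * (1 - η - δ * ρ)) < 1 - η - δ * ρ := by
  have hden : 0 < ρ - κ + δ * (1 - η - δ * ρ) := by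
    rcases (show 0 ≤ ρ - κ + δ * (1 - η - δ * ρ) by nlinarith).lt_or_eq with h | h
    · exact h
    · rw [← h, div_zero] at hRC3
      nlinarith
  exact (lt_div_iff₀ hden).mp hRC3

lemma mul_sq_lt_one_of_mul_add_lt (hκρ : κ ≤ ρ) (hA : 0 < 1 - η - δ * ρ)
    (hTA : T ^ 2 * (ρ - κ + δ * (1 - η - δ * ρ)) < 1 - η - δ * ρ) :
    δ * T ^ 2 < 1 := by
  nlinarith [sq_nonneg T]

lemma contractionCoeff_nonneg (hρ : 0 < ρ) (hA : 0 < 1 - η - δ * ρ) (hδT : δ * T ^ 2 < 1) :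
    0 ≤ contractionCoeff T η δ ρ := by
  have hρA : 0 < ρ * (1 - η) - δ * ρ ^ 2 := by nlinarith
  unfold contractionCoeff
  have : 0 < 1 - δ * T ^ 2 := by linarith
  positivity

lemma contractionCoeff_mul_lt_one (hρ : 0 < ρ) (hA : 0 < 1 - η - δ * ρ)
    (hδT : δ * T ^ 2 < 1)
    (hTA : T ^ 2 * (ρ - κ + δ * (1 - η - δ * ρ)) < 1 - η - δ * ρ) :
    contractionCoeff T η δ ρ * (ρ * (ρ - κ)) < 1 := by
  have hδT' : 0 < 1 - δ * T ^ 2 := by linarith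
  have hρA : ρ * (1 - η) - δ * ρ ^ 2 = ρ * (1 - η - δ * ρ) := by ring
  have hχ : contractionCoeff T η δ ρ * (ρ * (ρ - κ)) =
      T ^ 2 * (ρ - κ) / ((1 - δ * T ^ 2) * (1 - η - δ * ρ)) := by
    unfold contractionCoeff
    rw [hρA]
    field_simp
  rw [hχ, div_lt_one (by positivity)]
  nlinarith

end Scalar
section Matrix

variable {ι : Type*} [Fintype ι] [DecidableEq ι]

lemma one_sub_smul_shift_mul_shift {R : Type*} [CommRing R] (J : Matrix ι ι R) (χ ρ κ : R) :
    1 - χ • ((ρ • 1 - Jᵀ) * (ρ • 1 - J)) =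
      (1 - χ * (ρ * (ρ - κ))) • 1 + (χ * ρ) • (J + Jᵀ - (2 * κ) • 1) +
        χ • ((ρ * κ) • 1 - Jᵀ * J) := by
  simp only [Matrix.sub_mul, Matrix.mul_sub, Matrix.smul_mul, Matrix.mul_smul,
    Matrix.one_mul, Matrix.mul_one]
  module

lemma posDef_one_sub_smul_shift_mul_shift {J : Matrix ι ι ℝ} {χ ρ κ : ℝ}
    (hmono : (J + Jᵀ - (2 * κ) • 1).PosSemidef) (hlip : ((ρ * κ) • 1 - Jᵀ * J).PosSemidef)
    (hχ : 0 ≤ χ) (hρ : 0 ≤ ρ) (hχρ : χ * (ρ * (ρ - κ)) < 1) :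
    (1 - χ • ((ρ • 1 - Jᵀ) * (ρ • 1 - J))).PosDef := by
  rw [one_sub_smul_shift_mul_shift J χ ρ κ, add_assoc]
  exact (PosDef.one.smul (sub_pos.mpr hχρ)).add_posSemidef
    ((hmono.smul (mul_nonneg hχ hρ)).add (hlip.smul hχ))

end Matrix

theorem RC3_implies_contractivity_general {n : ℕ}
    (J : Matrix (Fin n) (Fin n) ℝ) (κ ℓ T η δ : ℝ)
    (hκ : 0 < κ) (hκℓ : κ ≤ ℓ)
    (hδ0 : 0 ≤ δ) (hδ : δ < (1 - η) / ((ℓ / κ) * ℓ))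
    (hmono : ((J + Jᵀ) - (2 * κ) • (1 : Matrix (Fin n) (Fin n) ℝ)).PosSemidef)
    (hlip : ((ℓ ^ 2 • (1 : Matrix (Fin n) (Fin n) ℝ)) - Jᵀ * J).PosSemidef)
    (hRC3 : T ^ 2 < (1 - η - δ * ((ℓ / κ) * ℓ)) /
      ((ℓ / κ) * ℓ - κ + δ * (1 - η - δ * ((ℓ / κ) * ℓ)))) :
    ((1 : Matrix (Fin n) (Fin n) ℝ) -
      ((T ^ 2 / (1 - δ * T ^ 2)) * (1 / ((ℓ / κ) * ℓ * (1 - η) - δ * ((ℓ / κ) * ℓ) ^ 2))) •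
        ((((ℓ / κ) * ℓ) • (1 : Matrix (Fin n) (Fin n) ℝ) - Jᵀ) *
          (((ℓ / κ) * ℓ) • (1 : Matrix (Fin n) (Fin n) ℝ) - J))).PosDef := by
  set ρ := ℓ / κ * ℓ
  have hρ : 0 < ρ := by have := hκ.trans_le hκℓ; positivity
  have hρκ : ρ * κ = ℓ ^ 2 := by simp only [ρ]; field_simp
  have hκρ : κ ≤ ρ := le_of_mul_le_mul_right (by nlinarith) hκ
  have hA : 0 < 1 - η - δ * ρ := by linarith [(lt_div_iff₀ hρ).mp hδ]
  have hTA := mul_add_lt_of_rc3 hκρ hδ0 hA hRC3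
  have hδT := mul_sq_lt_one_of_mul_add_lt hκρ hA hTA
  exact posDef_one_sub_smul_shift_mul_shift hmono (hρκ ▸ hlip)
    (contractionCoeff_nonneg hρ hA hδT) hρ.le (contractionCoeff_mul_lt_one hρ hA hδT hTA)

/-- Lemma 3 of the paper: for a `κ`-strongly monotone, `ℓ`-Lipschitz pseudogradient with
condition number `σ = ℓ/κ`, the reset condition (RC₃) implies that `S_δ` is
`(σℓ)`-globally contractive:
`Iₙ - χ (σℓIₙ - Jᵀ)(σℓIₙ - J) ≻ 0` with `χ = (T²/(1-δT²)) / (σℓ(1-η) - δσ²ℓ²)`. -/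
theorem RC3_implies_contractivity {n : ℕ}
    (J : Matrix (Fin n) (Fin n) ℝ) (κ ℓ T η δ : ℝ)
    (hκ : 0 < κ) (hκℓ : κ ≤ ℓ) (hη : 0 < η) (hη2 : η ≤ 1 / 2)
    (hδ0 : 0 ≤ δ) (hδ : δ < (1 - η) / ((ℓ / κ) * ℓ))
    (hmono : ((J + Jᵀ) - (2 * κ) • (1 : Matrix (Fin n) (Fin n) ℝ)).PosSemidef)
    (hlip : ((ℓ ^ 2 • (1 : Matrix (Fin n) (Fin n) ℝ)) - Jᵀ * J).PosSemidef)
    (hT : 0 < T)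
    (hRC3 : T ^ 2 < (1 - η - δ * ((ℓ / κ) * ℓ)) /
      ((ℓ / κ) * ℓ - κ + δ * (1 - η - δ * ((ℓ / κ) * ℓ)))) :
    ((1 : Matrix (Fin n) (Fin n) ℝ) -
      ((T ^ 2 / (1 - δ * T ^ 2)) * (1 / ((ℓ / κ) * ℓ * (1 - η) - δ * ((ℓ / κ) * ℓ) ^ 2))) •
        ((((ℓ / κ) * ℓ) • (1 : Matrix (Fin n) (Fin n) ℝ) - Jᵀ) *
          (((ℓ / κ) * ℓ) • (1 : Matrix (Fin n) (Fin n) ℝ) - J))).PosDef :=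
  RC3_implies_contractivity_general J κ ℓ T η δ hκ hκℓ hδ0 hδ hmono hlip hRC3
end

section
/- Let V₁(p,q) = (1/4)‖p - q‖², V₂(p) = (1/4)‖p - q*‖², V₃(q,τ) = τ² (P(q) - P(q*)) for scalar τ, where P : ℝⁿ → ℝ is convex, differentiable with ℓ-Lipschitz gradient and minimizer q*. Along the flow q' = (2/τ)(p - q), p' = -2τ∇P(q), τ' = η with 0 < η ≤ 1/2 and τ > 0, the function V = V₁ + V₂ + V₃ satisfies dV/dt ≤ -(1/τ)‖p - q‖² - (τ/(2ℓ))‖∇P(q)‖². -/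
/-!
Along the flow the cross terms `⟪∇P(q), p - q⟫` cancel, and
`dV/dt = -(1/τ)‖p - q‖² - τ⟪∇P(q), q - q*⟫ + 2ητ(P(q) - P(q*))`.
For a convex function with `ℓ`-Lipschitz gradient vanishing at `q*`, comparing the first-order
convexity inequality at `q` with the descent lemma at `q*`, both evaluated at `q* + ∇P(q)/ℓ`, gives
`⟪∇P(q), q - q*⟫ ≥ P(q) - P(q*) + ‖∇P(q)‖²/(2ℓ)`; since `η ≤ 1/2` and `P(q) ≥ P(q*)`, the remaining
term `(2η - 1)τ(P(q) - P(q*))` is nonpositive.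
-/

open scoped RealInnerProductSpace

variable {F : Type*} [NormedAddCommGroup F] [InnerProductSpace ℝ F] [CompleteSpace F]
  {P : F → ℝ}

theorem HasGradientAt.comp_hasDerivAt {P' : F} {γ : ℝ → F} {γ' : F} {t : ℝ}
    (hP : HasGradientAt P P' (γ t)) (hγ : HasDerivAt γ γ' t) :
    HasDerivAt (fun s => P (γ s)) ⟪P', γ'⟫ t := by
  have := hP.hasFDerivAt.comp_hasDerivAt t hγ
  rwa [InnerProductSpace.toDual_apply_apply] at this

theorem IsLocalMin.hasGradientAt_eq_zero {P' x : F} (h : IsLocalMin P x)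
    (hP : HasGradientAt P P' x) : P' = 0 := by
  simpa using h.hasFDerivAt_eq_zero hP.hasFDerivAt

theorem ConvexOn.add_inner_le_of_hasGradientAt {P' x : F} (hconv : ConvexOn ℝ Set.univ P)
    (hP : HasGradientAt P P' x) (z : F) : P x + ⟪P', z - x⟫ ≤ P z := by
  let γ : ℝ →ᵃ[ℝ] F := AffineMap.lineMap x z
  have hline : ConvexOn ℝ Set.univ (fun s => P (γ s)) := hconv.comp_affineMap γ
  have hderiv : HasDerivAt (fun s => P (γ s)) ⟪P', z - x⟫ 0 :=
    (by simpa [γ] using hP : HasGradientAt P P' (γ 0)).comp_hasDerivAt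
      AffineMap.hasDerivAt_lineMap
  have := hline.le_slope_of_hasDerivAt trivial trivial one_pos hderiv
  simp only [slope_def_field, AffineMap.lineMap_apply_one, AffineMap.lineMap_apply_zero,
    sub_zero, div_one, γ] at this
  linarith

variable {g : F → F} {ℓ : ℝ}

theorem le_add_inner_add_sq_of_lipschitz_gradient (hgrad : ∀ x, HasGradientAt P (g x) x)
    (hlip : ∀ x y, ‖g x - g y‖ ≤ ℓ * ‖x - y‖) (x y : F) :
    P y ≤ P x + ⟪g x, y - x⟫ + ℓ / 2 * ‖y - x‖ ^ 2 := by
  let γ : ℝ →ᵃ[ℝ] F := AffineMap.lineMap x y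
  let ψ : ℝ → ℝ := fun s => P (γ s) - ⟪g x, y - x⟫ * s - ℓ * ‖y - x‖ ^ 2 / 2 * s ^ 2
  have hψ : ∀ s, HasDerivAt ψ (⟪g (γ s) - g x, y - x⟫ - ℓ * ‖y - x‖ ^ 2 * s) s := by
    intro s
    have := (((hgrad (γ s)).comp_hasDerivAt AffineMap.hasDerivAt_lineMap).sub
      ((hasDerivAt_id s).const_mul ⟪g x, y - x⟫)).sub
      ((hasDerivAt_pow 2 s).const_mul (ℓ * ‖y - x‖ ^ 2 / 2))
    exact this.congr_deriv (by rw [inner_sub_left]; simp only [mul_one, Nat.cast_ofNat, Nat.add_one_sub_one, pow_one]; ring)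
  have hψ' : ∀ s ∈ interior (Set.Icc (0 : ℝ) 1),
      ⟪g (γ s) - g x, y - x⟫ - ℓ * ‖y - x‖ ^ 2 * s ≤ 0 := by
    intro s hs
    rw [interior_Icc] at hs
    have hdist : ‖γ s - x‖ = s * ‖y - x‖ := by
      rw [← dist_eq_norm, dist_lineMap_left, Real.norm_of_nonneg hs.1.le, dist_comm,
        dist_eq_norm]
    have := calc ⟪g (γ s) - g x, y - x⟫
        _ ≤ ‖g (γ s) - g x‖ * ‖y - x‖ := real_inner_le_norm _ _
        _ ≤ ℓ * ‖γ s - x‖ * ‖y - x‖ := by gcongr; exact hlip _ _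
        _ = ℓ * ‖y - x‖ ^ 2 * s := by rw [hdist]; ring
    linarith
  have hanti : AntitoneOn ψ (Set.Icc 0 1) :=
    antitoneOn_of_hasDerivWithinAt_nonpos (convex_Icc 0 1)
      (fun s _ => (hψ s).continuousAt.continuousWithinAt)
      (fun s _ => (hψ s).hasDerivWithinAt) hψ'
  have := hanti (Set.left_mem_Icc.2 zero_le_one) (Set.right_mem_Icc.2 zero_le_one) zero_le_one
  simp only [AffineMap.lineMap_apply_one, AffineMap.lineMap_apply_zero, one_pow, mul_one,
    mul_zero, sub_zero, ne_eq, OfNat.ofNat_ne_zero, not_false_eq_true, zero_pow, ψ, γ] at this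
  linarith

theorem ConvexOn.norm_gradient_sq_le_of_lipschitz_gradient (hconv : ConvexOn ℝ Set.univ P)
    (hgrad : ∀ x, HasGradientAt P (g x) x) (hlip : ∀ x y, ‖g x - g y‖ ≤ ℓ * ‖x - y‖)
    (hℓ : 0 < ℓ) {xs : F} (hxs : g xs = 0) (x : F) :
    1 / (2 * ℓ) * ‖g x‖ ^ 2 ≤ ⟪g x, x - xs⟫ - (P x - P xs) := by
  set y := xs + ℓ⁻¹ • g x
  have hfirst := hconv.add_inner_le_of_hasGradientAt (hgrad x) y
  have hdescent := le_add_inner_add_sq_of_lipschitz_gradient hgrad hlip xs y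
  have hinner : ⟪g x, y - x⟫ = ℓ⁻¹ * ‖g x‖ ^ 2 - ⟪g x, x - xs⟫ := by
    rw [show y - x = ℓ⁻¹ • g x - (x - xs) by simp only [y]; abel, inner_sub_right,
      real_inner_smul_right, real_inner_self_eq_norm_sq]
  have hnorm : ‖y - xs‖ ^ 2 = ℓ⁻¹ ^ 2 * ‖g x‖ ^ 2 := by
    simp [y, norm_smul, mul_pow, abs_of_pos hℓ]
  rw [hinner] at hfirst
  rw [hnorm, hxs, inner_zero_left] at hdescent
  have hdescent_coeff : ℓ / 2 * (ℓ⁻¹ ^ 2 * ‖g x‖ ^ 2) = 1 / (2 * ℓ) * ‖g x‖ ^ 2 := by field_simp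
  have hfirst_coeff : ℓ⁻¹ * ‖g x‖ ^ 2 = 2 * (1 / (2 * ℓ) * ‖g x‖ ^ 2) := by field_simp
  linarith

theorem hasDerivAt_momentum_lyapunov {P' qs : F} {q p : ℝ → F} {τ : ℝ → ℝ} {η t : ℝ}
    (hP : HasGradientAt P P' (q t)) (hτ0 : τ t ≠ 0)
    (hq : HasDerivAt q ((2 / τ t) • (p t - q t)) t)
    (hp : HasDerivAt p ((-(2 * τ t)) • P') t) (hτ : HasDerivAt τ η t) :
    HasDerivAt (fun s => (1 / 4) * ‖p s - q s‖ ^ 2 + (1 / 4) * ‖p s - qs‖ ^ 2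
        + τ s ^ 2 * (P (q s) - P qs))
      (-(1 / τ t) * ‖p t - q t‖ ^ 2 - τ t * ⟪P', q t - qs⟫ + 2 * η * τ t * (P (q t) - P qs)) t := by
  have hV := (((hp.sub hq).norm_sq.const_mul (1 / 4)).add
    ((hp.sub_const qs).norm_sq.const_mul (1 / 4))).add
    ((hτ.pow 2).mul ((hP.comp_hasDerivAt hq).sub_const (P qs)))
  refine hV.congr_deriv ?_
  have hsplit : p t - qs = (p t - q t) + (q t - qs) := by abel
  rw [hsplit, inner_sub_right, inner_add_left]
  simp only [Pi.sub_apply, Pi.pow_apply, real_inner_smul_right, real_inner_self_eq_norm_sq,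
    real_inner_comm P']
  field_simp
  ring

theorem lyapunov_decrease_momentum_flow_general {n : ℕ}
    (P : EuclideanSpace ℝ (Fin n) → ℝ) (g : EuclideanSpace ℝ (Fin n) → EuclideanSpace ℝ (Fin n))
    (ℓ : ℝ) (hℓ : 0 < ℓ)
    (hconv : ConvexOn ℝ Set.univ P)
    (hgrad : ∀ x, HasGradientAt P (g x) x)
    (hlip : ∀ x y, ‖g x - g y‖ ≤ ℓ * ‖x - y‖)
    (qs : EuclideanSpace ℝ (Fin n)) (hmin : ∀ z, P qs ≤ P z)
    (η : ℝ) (hη2 : η ≤ 1 / 2)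
    (q p : ℝ → EuclideanSpace ℝ (Fin n)) (τ : ℝ → ℝ) (t : ℝ)
    (hτpos : 0 < τ t)
    (hq : HasDerivAt q ((2 / τ t) • (p t - q t)) t)
    (hp : HasDerivAt p ((-(2 * τ t)) • g (q t)) t)
    (hτ : HasDerivAt τ η t) :
    ∀ v : ℝ,
      HasDerivAt (fun s : ℝ =>
        (1 / 4) * ‖p s - q s‖ ^ 2 + (1 / 4) * ‖p s - qs‖ ^ 2 + (τ s) ^ 2 * (P (q s) - P qs))
        v t →
      v ≤ -(1 / τ t) * ‖p t - q t‖ ^ 2 - (τ t / (2 * ℓ)) * ‖g (q t)‖ ^ 2 := by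
  intro v hv
  rw [hv.unique (hasDerivAt_momentum_lyapunov (hgrad (q t)) hτpos.ne' hq hp hτ)]
  have hmin_local : IsLocalMin P qs := Filter.Eventually.of_forall hmin
  have hkey := hconv.norm_gradient_sq_le_of_lipschitz_gradient hgrad hlip hℓ
    (hmin_local.hasGradientAt_eq_zero (hgrad qs)) (q t)
  have hgap : 0 ≤ τ t * (1 - 2 * η) * (P (q t) - P qs) :=
    mul_nonneg (mul_nonneg hτpos.le (by linarith)) (sub_nonneg.2 (hmin (q t)))
  have hdecay := mul_le_mul_of_nonneg_left hkey hτpos.le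
  rw [div_eq_mul_one_div (τ t)]
  linarith

/-- Core Lyapunov decrease inequality for the centralized momentum flow in a convex
potential game: along `q' = (2/τ)(p-q)`, `p' = -2τ∇P(q)`, `τ' = η` with `0 < η ≤ 1/2`
and `τ > 0`, the function `V = (1/4)‖p-q‖² + (1/4)‖p-q*‖² + τ²(P(q)-P(q*))` satisfies
`dV/dt ≤ -(1/τ)‖p-q‖² - (τ/(2ℓ))‖∇P(q)‖²`. -/
theorem lyapunov_decrease_momentum_flow {n : ℕ}
    (P : EuclideanSpace ℝ (Fin n) → ℝ) (g : EuclideanSpace ℝ (Fin n) → EuclideanSpace ℝ (Fin n))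
    (ℓ : ℝ) (hℓ : 0 < ℓ)
    (hconv : ConvexOn ℝ Set.univ P)
    (hgrad : ∀ x, HasGradientAt P (g x) x)
    (hlip : ∀ x y, ‖g x - g y‖ ≤ ℓ * ‖x - y‖)
    (qs : EuclideanSpace ℝ (Fin n)) (hmin : ∀ z, P qs ≤ P z)
    (η : ℝ) (hη : 0 < η) (hη2 : η ≤ 1 / 2)
    (q p : ℝ → EuclideanSpace ℝ (Fin n)) (τ : ℝ → ℝ) (t : ℝ)
    (hτpos : 0 < τ t)
    (hq : HasDerivAt q ((2 / τ t) • (p t - q t)) t)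
    (hp : HasDerivAt p ((-(2 * τ t)) • g (q t)) t)
    (hτ : HasDerivAt τ η t) :
    ∀ v : ℝ,
      HasDerivAt (fun s : ℝ =>
        (1 / 4) * ‖p s - q s‖ ^ 2 + (1 / 4) * ‖p s - qs‖ ^ 2 + (τ s) ^ 2 * (P (q s) - P qs))
        v t →
      v ≤ -(1 / τ t) * ‖p t - q t‖ ^ 2 - (τ t / (2 * ℓ)) * ‖g (q t)‖ ^ 2 :=
  lyapunov_decrease_momentum_flow_general P g ℓ hℓ hconv hgrad hlip qs hmin η hη2 q p τ t hτpos hq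
    hp hτ
end
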